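/- arXiv:1310.6583 — 3 statements merged into one kernel-verified Lean document; each statement's English description precedes it below -/
import Mathlib

section
/- Let p be a prime and let s ≥ 1, k ≥ 1, and 1 ≤ j ≤ s be integers. Then v_p(s) ≤ v_p( binom(s,j) · (k+s-1)(k+s-2)⋯(k+s-j) ), where v_p denotes the p-adic valuation and the product has j consecutive factors. -/
/-! Since `s * C(s-1, j-1) = C(s, j) * j`, the number `s` divides `C(s, j) * j`, and `j` divides
any product of `j` consecutive integers. Hence `s` divides the nonzero number
`C(s, j) * (k+s-1)⋯(k+s-j)`, and `p`-adic valuations are monotone under divisibility. -/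

theorem padicValNat_le_of_dvd {p a b : ℕ} (hb : b ≠ 0) (hab : a ∣ b) :
    padicValNat p a ≤ padicValNat p b := by
  rcases eq_or_ne p 1 with rfl | hp
  · simp [padicValNat]
  · exact (padicValNat_dvd_iff_le_of_ne_one hp hb).1 (pow_padicValNat_dvd.trans hab)

theorem Nat.dvd_choose_mul_self {s j : ℕ} (hj : 1 ≤ j) : s ∣ s.choose j * j := by
  obtain ⟨i, rfl⟩ := Nat.exists_eq_add_of_le' hj
  rcases s with _ | n
  · simp
  · exact ⟨n.choose i, (Nat.add_one_mul_choose_eq n i).symm⟩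

theorem Nat.prod_Icc_sub_eq_descFactorial (N j : ℕ) :
    ∏ m ∈ Finset.Icc 1 j, (N - m) = (N - 1).descFactorial j := by
  rw [Nat.descFactorial_eq_prod_range, ← Finset.Ico_add_one_right_eq_Icc,
    Finset.prod_Ico_eq_prod_range]
  exact Finset.prod_congr rfl fun i _ => by omega

theorem Nat.dvd_choose_mul_descFactorial (s n : ℕ) {j : ℕ} (hj : 1 ≤ j) :
    s ∣ s.choose j * n.descFactorial j :=
  (Nat.dvd_choose_mul_self hj).trans <| mul_dvd_mul_left _ <|
    (Nat.dvd_factorial hj le_rfl).trans (Nat.factorial_dvd_descFactorial n j)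

theorem stmt0_general (p : ℕ) (s k j : ℕ) (hk : 1 ≤ k)
    (hj1 : 1 ≤ j) (hjs : j ≤ s) :
    padicValNat p s ≤
      padicValNat p (Nat.choose s j * ∏ m ∈ Finset.Icc 1 j, (k + s - m)) := by
  rw [Nat.prod_Icc_sub_eq_descFactorial]
  have hchoose : s.choose j ≠ 0 := (Nat.choose_pos hjs).ne'
  have hdesc : (k + s - 1).descFactorial j ≠ 0 := by
    rw [Ne, Nat.descFactorial_eq_zero_iff_lt]
    omega
  exact padicValNat_le_of_dvd (mul_ne_zero hchoose hdesc)
    (Nat.dvd_choose_mul_descFactorial s _ hj1)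

/-- For a prime `p` and integers `s ≥ 1`, `k ≥ 1`, `1 ≤ j ≤ s`:
`v_p(s) ≤ v_p( binom(s,j) · (k+s-1)(k+s-2)⋯(k+s-j) )`. -/
theorem stmt0 (p : ℕ) (hp : p.Prime) (s k j : ℕ) (hs : 1 ≤ s) (hk : 1 ≤ k)
    (hj1 : 1 ≤ j) (hjs : j ≤ s) :
    padicValNat p s ≤
      padicValNat p (Nat.choose s j * ∏ m ∈ Finset.Icc 1 j, (k + s - m)) :=
  stmt0_general p s k j hk hj1 hjs
end

section
/- Let R be a commutative ℚ-algebra. Define on R[[q]][X] the operators Θ (acting on q-expansions by Θ(∑ aₙ qⁿ) = ∑ n aₙ qⁿ, extended X-coefficientwise) and, for each integer m, δ_m(∑ F_i X^i) = ∑ (ΘF_i) X^i + (m - i) F_i X^{i+1}. Set δ_k^s = δ_{k+2s-2} ∘ ⋯ ∘ δ_{k+2} ∘ δ_k (s factors). Then for every f ∈ R[[q]] (an element of degree 0 in X) and all integers k, s with s ≥ 0: δ_k^s f = ∑_{j=0}^{s} binom(s,j) · ( ∏_{m=1}^{j}(k+s-m) ) · (Θ^{s-j} f) · X^j. -/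
noncomputable section

/-- The operator `Θ = q·d/dq` on formal power series: `Θ(∑ aₙ qⁿ) = ∑ n aₙ qⁿ`. -/
def thetaQ {R : Type*} [CommRing R] (f : PowerSeries R) : PowerSeries R :=
  PowerSeries.mk fun n => (n : R) * PowerSeries.coeff n f

/-- The algebraic Maaß–Shimura operator of weight `m` on `R[[q]][X]`:
`δ_m(∑ F_i X^i) = ∑ (ΘF_i) X^i + (m - i) F_i X^{i+1}`. -/
def delta {R : Type*} [CommRing R] (m : ℤ) (F : Polynomial (PowerSeries R)) :
    Polynomial (PowerSeries R) :=
  F.sum fun i a =>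
    Polynomial.C (thetaQ a) * Polynomial.X ^ i
      + Polynomial.C (((m - (i : ℤ) : ℤ) : PowerSeries R) * a) * Polynomial.X ^ (i + 1)

/-- `δ_k^s = δ_{k+2s-2} ∘ ⋯ ∘ δ_{k+2} ∘ δ_k` (s factors). -/
def deltaIter {R : Type*} [CommRing R] (k : ℤ) :
    ℕ → Polynomial (PowerSeries R) → Polynomial (PowerSeries R)
  | 0 => id
  | s + 1 => fun F => delta (k + 2 * s) (deltaIter k s F)

/-!
Compare `X`-coefficients. On coefficients `δ_m` acts by `F_0 ↦ ΘF_0` and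
`F_{n+1} ↦ ΘF_{n+1} + (m - n) F_n`, so the `X^j`-coefficient of `δ_k^s f` is an integer
multiple `c(s, j) · Θ^{s-j} f`, with `c(s+1, j+1) = c(s, j+1) + (k + 2s - j) c(s, j)`.
The claimed coefficients `binom(s,j) ∏_{m=1}^{j}(k+s-m)` satisfy this recurrence because
`binom(s+1,j+1) = binom(s,j) + binom(s,j+1)` and `binom(s,j+1)(j+1) = binom(s,j)(s-j)`.
-/

open Polynomial

section Operators

variable {R : Type*} [CommRing R]

lemma thetaQ_zero : thetaQ (0 : PowerSeries R) = 0 := by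
  ext n; simp [thetaQ]

lemma thetaQ_add (a b : PowerSeries R) : thetaQ (a + b) = thetaQ a + thetaQ b := by
  ext n; simp [thetaQ, mul_add]

lemma thetaQ_intCast_mul (z : ℤ) (g : PowerSeries R) :
    thetaQ ((z : PowerSeries R) * g) = (z : PowerSeries R) * thetaQ g := by
  ext n
  simp only [thetaQ, ← map_intCast (PowerSeries.C (R := R)), PowerSeries.coeff_C_mul,
    PowerSeries.coeff_mk]
  ring

lemma delta_add (m : ℤ) (F G : (PowerSeries R)[X]) :
    delta m (F + G) = delta m F + delta m G := by
  refine sum_add_index F G _ (fun i => ?_) (fun i a b => ?_)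
  · simp [thetaQ_zero]
  · simp only [thetaQ_add, mul_add, map_add, add_mul]
    ring

lemma delta_monomial (m : ℤ) (i : ℕ) (a : PowerSeries R) :
    delta m (monomial i a) =
      C (thetaQ a) * X ^ i + C (((m - i : ℤ) : PowerSeries R) * a) * X ^ (i + 1) :=
  sum_monomial_index _ _ (by simp [thetaQ_zero])

lemma coeff_delta_zero (m : ℤ) (F : (PowerSeries R)[X]) :
    (delta m F).coeff 0 = thetaQ (F.coeff 0) := by
  induction F using Polynomial.induction_on' with
  | add F G hF hG => simp only [delta_add, coeff_add, hF, hG, thetaQ_add]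
  | monomial i a =>
    rw [delta_monomial, coeff_add, coeff_C_mul_X_pow, coeff_C_mul_X_pow, coeff_monomial]
    rcases i with _ | i <;> simp [thetaQ_zero]

lemma coeff_delta_succ (m : ℤ) (F : (PowerSeries R)[X]) (n : ℕ) :
    (delta m F).coeff (n + 1) =
      thetaQ (F.coeff (n + 1)) + ((m - n : ℤ) : PowerSeries R) * F.coeff n := by
  induction F using Polynomial.induction_on' with
  | add F G hF hG => simp only [delta_add, coeff_add, hF, hG, thetaQ_add]; ring
  | monomial i a =>
    rw [delta_monomial, coeff_add, coeff_C_mul_X_pow, coeff_C_mul_X_pow, coeff_monomial,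
      coeff_monomial]
    by_cases hi : i = n
    · subst hi; simp [thetaQ_zero]
    · rw [apply_ite thetaQ, thetaQ_zero]
      simp [hi, Ne.symm hi, eq_comm]

end Operators

section ShimuraCoeff

lemma prod_Icc_one_succ_sub {A : Type*} [CommRing A] (x : A) (j : ℕ) :
    ∏ m ∈ Finset.Icc 1 (j + 1), (x + 1 - m) = x * ∏ m ∈ Finset.Icc 1 j, (x - m) := by
  induction j with
  | zero => simp
  | succ j ih =>
    rw [Finset.prod_Icc_succ_top (by omega), ih, Finset.prod_Icc_succ_top (by omega)]
    push_cast
    ring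

lemma intCast_choose_succ_mul (s j : ℕ) :
    (s.choose (j + 1) : ℤ) * (j + 1) = s.choose j * (s - j) := by
  rcases le_or_gt j s with hj | hj
  · have h := Nat.choose_succ_right_eq s j
    zify [hj] at h
    exact h
  · simp [Nat.choose_eq_zero_of_lt hj, Nat.choose_eq_zero_of_lt (hj.trans (Nat.lt_succ_self j))]

def shimuraCoeff (k : ℤ) (s j : ℕ) : ℤ :=
  s.choose j * ∏ m ∈ Finset.Icc 1 j, (k + s - m)

lemma shimuraCoeff_zero_right (k : ℤ) (s : ℕ) : shimuraCoeff k s 0 = 1 := by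
  simp [shimuraCoeff]

lemma shimuraCoeff_of_lt {k : ℤ} {s j : ℕ} (h : s < j) : shimuraCoeff k s j = 0 := by
  simp [shimuraCoeff, Nat.choose_eq_zero_of_lt h]

lemma shimuraCoeff_succ_succ (k : ℤ) (s j : ℕ) :
    shimuraCoeff k (s + 1) (j + 1) =
      shimuraCoeff k s (j + 1) + (k + 2 * s - j) * shimuraCoeff k s j := by
  have hprod : ∏ m ∈ Finset.Icc 1 (j + 1), (k + ((s + 1 : ℕ) : ℤ) - m) =
      (k + s) * ∏ m ∈ Finset.Icc 1 j, (k + s - m) := by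
    push_cast
    simpa only [add_assoc] using prod_Icc_one_succ_sub (k + s) j
  simp only [shimuraCoeff, hprod, Nat.choose_succ_succ,
    Finset.prod_Icc_succ_top (by omega : 1 ≤ j + 1)]
  push_cast
  linear_combination (∏ m ∈ Finset.Icc 1 j, (k + s - m)) * intCast_choose_succ_mul s j

end ShimuraCoeff

lemma coeff_deltaIter_C {R : Type*} [CommRing R] (k : ℤ) (s j : ℕ) (f : PowerSeries R) :
    (deltaIter k s (C f)).coeff j = (shimuraCoeff k s j : PowerSeries R) * thetaQ^[s - j] f := by
  induction s generalizing j with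
  | zero =>
    rcases j with _ | j
    · simp [deltaIter, shimuraCoeff_zero_right]
    · simp [deltaIter, shimuraCoeff_of_lt (Nat.succ_pos j)]
  | succ s ih =>
    rcases j with _ | j
    · simp [deltaIter, coeff_delta_zero, ih, shimuraCoeff_zero_right,
        Function.iterate_succ_apply']
    · have hΘ : thetaQ ((shimuraCoeff k s (j + 1) : PowerSeries R) * thetaQ^[s - (j + 1)] f) =
          (shimuraCoeff k s (j + 1) : PowerSeries R) * thetaQ^[s - j] f := by
        rcases lt_or_ge j s with hj | hj
        · rw [thetaQ_intCast_mul, ← Function.iterate_succ_apply' thetaQ,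
            show s - j = s - (j + 1) + 1 by omega]
        · simp [shimuraCoeff_of_lt (Nat.lt_succ_of_le hj), thetaQ_zero]
      simp only [deltaIter, coeff_delta_succ, ih, hΘ, shimuraCoeff_succ_succ,
        Nat.add_sub_add_right]
      push_cast
      ring

theorem stmt1_general {R : Type*} [CommRing R] (k : ℤ) (s : ℕ) (f : PowerSeries R) :
    deltaIter k s (Polynomial.C f) =
      ∑ j ∈ Finset.range (s + 1),
        Polynomial.C
          ((((s.choose j : ℤ) * ∏ m ∈ Finset.Icc 1 j, (k + (s : ℤ) - (m : ℤ)) : ℤ) :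
              PowerSeries R) * ((thetaQ (R := R))^[s - j] f)) * Polynomial.X ^ j := by
  refine Polynomial.ext fun j => ?_
  rw [coeff_deltaIter_C, finsetSum_coeff]
  simp only [coeff_C_mul_X_pow, Finset.sum_ite_eq, Finset.mem_range]
  split_ifs with hj
  · rfl
  · simp [shimuraCoeff_of_lt (not_lt.mp hj)]

/-- For `f ∈ R[[q]]` (degree 0 in `X`):
`δ_k^s f = ∑_{j=0}^{s} binom(s,j) · (∏_{m=1}^{j}(k+s-m)) · (Θ^{s-j} f) · X^j`. -/
theorem stmt1 {R : Type*} [CommRing R] [Algebra ℚ R] (k : ℤ) (s : ℕ) (f : PowerSeries R) :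
    deltaIter k s (Polynomial.C f) =
      ∑ j ∈ Finset.range (s + 1),
        Polynomial.C
          ((((s.choose j : ℤ) * ∏ m ∈ Finset.Icc 1 j, (k + (s : ℤ) - (m : ℤ)) : ℤ) :
              PowerSeries R) * ((thetaQ (R := R))^[s - j] f)) * Polynomial.X ^ j :=
  stmt1_general k s f
end
end

section
/- Let f = ∑_{i=0}^{r} f_i(q) X^i with f_i ∈ ℚ_p[[q]], such that f_r ≠ 0 and all coefficients of all f_i have p-adic valuation bounded below (i.e., f has finite sup-norm |f| = sup over all coefficients of |a|_p, and |f_r| is finite and nonzero). Suppose U_p f = λ f for some λ ∈ ℚ_p^×, where U_p(∑_i∑_n a_n^{(i)}qⁿX^i) = ∑_i∑_n p^i a_{pn}^{(i)}qⁿX^i. Then v_p(λ) ≥ r. -/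
noncomputable section

/-- The `U_p` operator on formal power series: `coeff n ↦ coeff (p·n)`. -/
def upQ {R : Type*} [CommRing R] (p : ℕ) (f : PowerSeries R) : PowerSeries R :=
  PowerSeries.mk fun n => PowerSeries.coeff (R := R) (p * n) f

/-- The `U_p` operator on `R[[q]][X]`:
`U_p(∑_i ∑_n a_n^{(i)} qⁿ X^i) = ∑_i ∑_n p^i a_{pn}^{(i)} qⁿ X^i`. -/
def upP {R : Type*} [CommRing R] (p : ℕ) (F : Polynomial (PowerSeries R)) :
    Polynomial (PowerSeries R) :=
  F.sum fun i a => Polynomial.C ((p : PowerSeries R) ^ i * upQ p a) * Polynomial.X ^ i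

/-!
Comparing the coefficients of `X^r` in `U_p f = λ f` gives `p^r a_{pn} = λ a_n` for the
coefficients `a_n` of `f_r`. Hence `|a_{pn}| = p^r |λ| |a_n|`. If `v_p(λ) < r` the factor
`p^r |λ|` exceeds `1`, so iterating `n ↦ p n` makes `|a_n|` grow geometrically; boundedness of the
coefficients then forces `f_r = 0`.
-/

theorem eq_zero_of_forall_norm_le_of_mul_norm_le_norm_comp {α E : Type*} [NormedAddGroup E]
    {a : α → E} {σ : α → α} {c C : ℝ} (hc : 1 < c) (hC : ∀ x, ‖a x‖ ≤ C)
    (hgrowth : ∀ x, c * ‖a x‖ ≤ ‖a (σ x)‖) (x : α) : a x = 0 := by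
  have hiter : ∀ k y, c ^ k * ‖a y‖ ≤ C := by
    intro k
    induction k with
    | zero => simpa using hC
    | succ k ih =>
      intro y
      calc c ^ (k + 1) * ‖a y‖ = c ^ k * (c * ‖a y‖) := by ring
        _ ≤ c ^ k * ‖a (σ y)‖ := by gcongr; exact hgrowth y
        _ ≤ C := ih (σ y)
  by_contra hx
  have hgrow : Filter.Tendsto (fun k : ℕ => c ^ k * ‖a x‖) Filter.atTop Filter.atTop :=
    (tendsto_pow_atTop_atTop_of_one_lt hc).atTop_mul_const (norm_pos_iff.mpr hx)
  obtain ⟨k, hk⟩ := (hgrow.eventually_gt_atTop C).exists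
  linarith [hiter k x]

section UpOperator

variable {R : Type*} [CommRing R] (p : ℕ)

@[simp]
theorem coeff_upQ (f : PowerSeries R) (n : ℕ) :
    PowerSeries.coeff n (upQ p f) = PowerSeries.coeff (p * n) f :=
  PowerSeries.coeff_mk _ _

@[simp]
theorem upQ_zero : upQ (R := R) p 0 = 0 := by
  ext n
  simp

theorem coeff_upP (F : Polynomial (PowerSeries R)) (i : ℕ) :
    (upP p F).coeff i = (p : PowerSeries R) ^ i * upQ p (F.coeff i) := by
  rw [upP, Polynomial.sum_def, Polynomial.finsetSum_coeff]
  simp only [Polynomial.coeff_C_mul_X_pow]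
  rw [Finset.sum_ite_eq]
  split_ifs with hi
  · rfl
  · simp [Polynomial.notMem_support_iff.mp hi]

theorem natCast_pow_mul_coeff_of_upP_eq_C_mul {F : Polynomial (PowerSeries R)} {lam : R}
    (heig : upP p F = Polynomial.C (PowerSeries.C lam) * F) (i n : ℕ) :
    (p : R) ^ i * PowerSeries.coeff (p * n) (F.coeff i) =
      lam * PowerSeries.coeff n (F.coeff i) := by
  have h := congrArg (fun G : Polynomial (PowerSeries R) => PowerSeries.coeff n (G.coeff i)) heig
  simp only [coeff_upP, Polynomial.coeff_C_mul, PowerSeries.coeff_C_mul] at h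
  rwa [← map_natCast (PowerSeries.C (R := R)), ← map_pow, PowerSeries.coeff_C_mul,
    coeff_upQ] at h

end UpOperator

theorem Padic.one_lt_norm_mul_pow_of_valuation_lt {p : ℕ} [Fact p.Prime] {lam : ℚ_[p]}
    (hlam : lam ≠ 0) {r : ℕ} (hv : lam.valuation < r) : 1 < ‖lam‖ * (p : ℝ) ^ r := by
  have hp : (1 : ℝ) < p := by exact_mod_cast (Fact.out : p.Prime).one_lt
  rw [Padic.norm_eq_zpow_neg_valuation hlam, ← zpow_natCast, ← zpow_add₀ (by positivity)]
  exact one_lt_zpow₀ hp (by omega)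

theorem stmt8_general (p : ℕ) [Fact p.Prime] (r : ℕ) (f : Polynomial (PowerSeries ℚ_[p]))
    (hlead : f.coeff r ≠ 0)
    (hbdd : ∃ C : ℝ, ∀ i n, ‖PowerSeries.coeff (R := ℚ_[p]) n (f.coeff i)‖ ≤ C)
    (lam : ℚ_[p]) (hlam : lam ≠ 0)
    (heig : upP p f = Polynomial.C (PowerSeries.C (R := ℚ_[p]) lam) * f) :
    (r : ℤ) ≤ lam.valuation := by
  obtain ⟨C, hC⟩ := hbdd
  by_contra! hv
  have hgrowth : ∀ n, ‖lam‖ * (p : ℝ) ^ r * ‖PowerSeries.coeff n (f.coeff r)‖ ≤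
      ‖PowerSeries.coeff (p * n) (f.coeff r)‖ := fun n => le_of_eq <| by
    have h := congrArg norm (natCast_pow_mul_coeff_of_upP_eq_C_mul p heig r n)
    rw [norm_mul, norm_mul, Padic.norm_p_pow, zpow_neg, zpow_natCast] at h
    have hp : (p : ℝ) ^ r ≠ 0 :=
      pow_ne_zero r (Nat.cast_ne_zero.mpr (Fact.out : p.Prime).ne_zero)
    calc ‖lam‖ * (p : ℝ) ^ r * ‖PowerSeries.coeff n (f.coeff r)‖
        = (p : ℝ) ^ r * (‖lam‖ * ‖PowerSeries.coeff n (f.coeff r)‖) := by ring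
      _ = ‖PowerSeries.coeff (p * n) (f.coeff r)‖ := by
        rw [← h, ← mul_assoc, mul_inv_cancel₀ hp, one_mul]
  exact hlead <| PowerSeries.ext <| eq_zero_of_forall_norm_le_of_mul_norm_le_norm_comp
    (Padic.one_lt_norm_mul_pow_of_valuation_lt hlam hv) (hC r) hgrowth

/-- If `f = ∑_{i=0}^r f_i X^i` with `f_r ≠ 0`, all coefficients bounded in norm, and
`U_p f = λ f` with `λ ≠ 0`, then `v_p(λ) ≥ r`. -/
theorem stmt8 (p : ℕ) [Fact p.Prime] (r : ℕ) (f : Polynomial (PowerSeries ℚ_[p]))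
    (hdeg : f.natDegree ≤ r) (hlead : f.coeff r ≠ 0)
    (hbdd : ∃ C : ℝ, ∀ i n, ‖PowerSeries.coeff (R := ℚ_[p]) n (f.coeff i)‖ ≤ C)
    (lam : ℚ_[p]) (hlam : lam ≠ 0)
    (heig : upP p f = Polynomial.C (PowerSeries.C (R := ℚ_[p]) lam) * f) :
    (r : ℤ) ≤ lam.valuation :=
  stmt8_general p r f hlead hbdd lam hlam heig
end
end
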